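/- arXiv:1703.06815 — 2 statements merged into one kernel-verified Lean document; each statement's English description precedes it below -/
import Mathlib

section
/- Let D be a domain description over a finite instant set and M_D its model. Then Σ_{W ∈ W} M_D(W) = 1; consequently the set of well-behaved worlds w.r.t. D is nonempty. -/
open scoped Classical

/-- A PEC domain description over fluents `F`, actions `A`, values `V` and
instants `Fin (n+1)`: an i-proposition (a set of initial outcomes, i.e. full
fluent states with probabilities), a list of c-propositions (a body, i.e. a
condition on states, together with a head of outcomes, i.e. partial fluent
states with probabilities), and p-propositions (action, instant, probability). -/
structure PECDomain (F A V : Type) (n : ℕ) where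
  init : Finset ((F → V) × ℝ)
  cprops : List ((((F → V) × (A → Bool)) → Prop) × Finset ((F → Option V) × ℝ))
  pprops : Finset (A × Fin (n + 1) × ℝ)

/-- A world: a function from instants to states (fluent valuation + action valuation). -/
abbrev PECWorld (F A V : Type) (n : ℕ) := Fin (n + 1) → (F → V) × (A → Bool)

/-- Fluent state update by a partial fluent state. -/
def upd {F V : Type} (s : F → V) (x : F → Option V) : F → V := fun f => (x f).getD (s f)

variable {F A V : Type} {n : ℕ}

/-- The c-proposition `c` is activated at instant `i` in world `w`. -/
def activated (D : PECDomain F A V n) (w : PECWorld F A V n) (i : Fin (n + 1))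
    (c : (((F → V) × (A → Bool)) → Prop) × Finset ((F → Option V) × ℝ)) : Prop :=
  c ∈ D.cprops ∧ c.1 (w i)

/-- Closed world assumption for actions: an action holds only if some p-proposition
licenses it, and actions with probability 1 must hold. -/
def cwa (D : PECDomain F A V n) (w : PECWorld F A V n) : Prop :=
  (∀ a i, (w i).2 a = true → ∃ p : ℝ, (a, i, p) ∈ D.pprops) ∧
  ∀ a i, (a, i, (1 : ℝ)) ∈ D.pprops → (w i).2 a = true

/-- A trace of `w`: an initial choice from the i-proposition matching `w` at instant 0,
and an effect choice assigning, to each instant at which a cause occurs, an outcome of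
the activated c-proposition, such that `w` realizes justified change. -/
def IsTrace (D : PECDomain F A V n) (w : PECWorld F A V n)
    (tr : ((F → V) × ℝ) × (Fin (n + 1) → Option ((F → Option V) × ℝ))) : Prop :=
  tr.1 ∈ D.init ∧ (w 0).1 = tr.1.1 ∧
  (∀ i, (tr.2 i).elim (¬ ∃ c, activated D w i c)
      (fun O => ∃ c, activated D w i c ∧ O ∈ c.2)) ∧
  ∀ i : Fin n, (w i.succ).1 =
    (tr.2 i.castSucc).elim (w i.castSucc).1 (fun O => upd (w i.castSucc).1 O.1)

/-- A world is well-behaved iff it satisfies the CWA for actions, the initial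
condition and the justified change condition (i.e. it has a trace). -/
def wellBehaved (D : PECDomain F A V n) (w : PECWorld F A V n) : Prop :=
  cwa D w ∧ ∃ tr, IsTrace D w tr

/-- Evaluation of a trace: the probability of the initial choice times the
probabilities of all chosen outcomes. -/
noncomputable def epsTrace
    (tr : ((F → V) × ℝ) × (Fin (n + 1) → Option ((F → Option V) × ℝ))) : ℝ :=
  tr.1.2 * ∏ i : Fin (n + 1), (tr.2 i).elim 1 Prod.snd

/-- Evaluation of the action narrative of `D` against `w`: multiply `P⁺` for
p-propositions whose action occurs at its instant in `w`, and `1 - P⁺` otherwise. -/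
noncomputable def epsD (D : PECDomain F A V n) (w : PECWorld F A V n) : ℝ :=
  ∏ q ∈ D.pprops, (if (w q.2.1).2 q.1 = true then q.2.2 else 1 - q.2.2)

/-- The model of a domain description: `0` on non-well-behaved worlds, and
`ε_D(W) · Σ_{tr ∈ TR_D^W} ε(tr)` on well-behaved worlds. -/
noncomputable def modelOf (D : PECDomain F A V n) (w : PECWorld F A V n) : ℝ :=
  if wellBehaved D w then epsD D w * ∑ᶠ tr ∈ {tr | IsTrace D w tr}, epsTrace tr else 0

/-!
Split a world into its action part `τ` and its fluent part `σ`. For fixed `τ`, a world together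
with one of its traces is a run of a Markov chain on fluent states: at each instant the effect is
drawn from the head of the unique activated c-proposition, or is trivial when none is activated.
Since every head sums to 1, the mass of all runs is 1 (induction on the number of instants), and
so is the mass of the initial choices. What is left is `∑ τ, ε_D`, a product of independent
Bernoulli factors `P⁺`, `1 - P⁺`, which also sums to 1.
-/

open Finset

theorem Finset.sum_piFinset_fin_succ {X M : Type*} [AddCommMonoid M] {m : ℕ} (s : Finset X)
    (g : (Fin (m + 1) → X) → M) :
    ∑ f ∈ Fintype.piFinset (fun _ => s), g f =
      ∑ x ∈ s, ∑ f ∈ Fintype.piFinset (fun _ : Fin m => s), g (Fin.cons x f) := by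
  have h := filter_piFinset_eq_map_consEquiv (fun _ : Fin (m + 1) => s) (fun _ => True)
  simp only [filter_true] at h
  rw [h, sum_map, sum_product]
  rfl

section Runs

variable {S X : Type*} {m : ℕ}

def IsRun (step : S → X → S) (allowed : Fin (m + 1) → S → X → Prop) (s₀ : S)
    (σ : Fin (m + 1) → S) (f : Fin (m + 1) → X) : Prop :=
  σ 0 = s₀ ∧ (∀ i, allowed i (σ i) (f i)) ∧
    ∀ i : Fin m, σ i.succ = step (σ i.castSucc) (f i.castSucc)

theorem isRun_fin_one_iff {step : S → X → S} {allowed : Fin 1 → S → X → Prop} {s₀ : S}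
    {σ : Fin 1 → S} {f : Fin 1 → X} :
    IsRun step allowed s₀ σ f ↔ σ 0 = s₀ ∧ allowed 0 (σ 0) (f 0) := by
  simp [IsRun, Fin.forall_fin_one]

theorem isRun_cons_iff {step : S → X → S} {allowed : Fin (m + 2) → S → X → Prop} {s₀ s : S}
    {x : X} {σ : Fin (m + 1) → S} {f : Fin (m + 1) → X} :
    IsRun step allowed s₀ (Fin.cons s σ) (Fin.cons x f) ↔
      s = s₀ ∧ allowed 0 s x ∧ IsRun step (fun i => allowed i.succ) (step s x) σ f := by
  simp only [IsRun, Fin.forall_fin_succ (n := m + 1), Fin.forall_fin_succ (n := m), Fin.cons_zero,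
    Fin.cons_succ, Fin.succ_zero_eq_one, Fin.castSucc_zero, ← Fin.succ_castSucc]
  tauto

theorem sum_pi_sum_piFinset_fin_succ [Fintype S] {M : Type*} [AddCommMonoid M] (Xs : Finset X)
    (G : (Fin (m + 1) → S) → (Fin (m + 1) → X) → M) :
    ∑ σ, ∑ f ∈ Fintype.piFinset (fun _ => Xs), G σ f =
      ∑ s, ∑ x ∈ Xs, ∑ σ, ∑ f ∈ Fintype.piFinset (fun _ => Xs),
        G (Fin.cons s σ) (Fin.cons x f) := by
  rw [← Fintype.piFinset_univ, sum_piFinset_fin_succ]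
  simp only [Fintype.piFinset_univ, sum_piFinset_fin_succ Xs]
  exact sum_congr rfl fun s _ => sum_comm

theorem sum_isRun_eq_one [Fintype S] (step : S → X → S) (p : X → ℝ) (Xs : Finset X)
    (allowed : Fin (m + 1) → S → X → Prop) (s₀ : S)
    (h : ∀ i s, ∑ x ∈ Xs with allowed i s x, p x = 1) :
    ∑ σ : Fin (m + 1) → S, ∑ f ∈ Fintype.piFinset (fun _ => Xs),
      (if IsRun step allowed s₀ σ f then ∏ i, p (f i) else 0) = 1 := by
  induction m generalizing s₀ with
  | zero =>
    rw [sum_pi_sum_piFinset_fin_succ,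
      Fintype.sum_eq_single s₀ fun s hs => by simp [isRun_fin_one_iff, hs]]
    simpa [isRun_fin_one_iff, ← sum_filter] using h 0 s₀
  | succ m ih =>
    have hsplit : ∀ s x σ f,
        (if IsRun step allowed s₀ (Fin.cons s σ) (Fin.cons x f) then
          ∏ i, p ((Fin.cons x f : Fin (m + 2) → X) i) else 0) =
        if s = s₀ then (if allowed 0 s x then p x else 0) *
          (if IsRun step (fun i => allowed i.succ) (step s x) σ f then ∏ i, p (f i) else 0)
        else 0 := by
      intro s x σ f
      simp only [isRun_cons_iff, Fin.prod_univ_succ, Fin.cons_zero, Fin.cons_succ]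
      split_ifs <;> simp_all
    rw [sum_pi_sum_piFinset_fin_succ, Fintype.sum_eq_single s₀ fun s hs => by simp [hsplit, hs]]
    simp only [hsplit, if_true]
    simp_rw [← mul_sum, ih _ _ fun i => h i.succ, mul_one, ← sum_filter]
    exact h 0 s₀

end Runs

section Bernoulli

variable {ι β : Type*} [Fintype ι] [DecidableEq ι]

theorem sum_ite_prod_bernoulli_eq_one (P : Finset β) (key : β → ι) (prob : β → ℝ)
    (hkey : Set.InjOn key P) :
    ∑ τ : ι → Bool, (if ∀ z, τ z = true → ∃ q ∈ P, key q = z then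
      ∏ q ∈ P, (if τ (key q) then prob q else 1 - prob q) else 0) = 1 := by
  set φ : ι → Bool → ℝ := fun z b => if b = true → ∃ q ∈ P, key q = z then
    ∏ q ∈ P with key q = z, (if b then prob q else 1 - prob q) else 0
  -- The summand factorises over `ι`, and the factor at `z` sums to `prob q + (1 - prob q)` if
  -- `z = key q` for some (unique) `q ∈ P`, and to `0 + 1` otherwise.
  have hfactor : ∀ τ : ι → Bool, (if ∀ z, τ z = true → ∃ q ∈ P, key q = z then
      ∏ q ∈ P, (if τ (key q) then prob q else 1 - prob q) else 0) = ∏ z, φ z (τ z) := by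
    intro τ
    simp only [φ, Fintype.prod_ite_zero]
    refine if_congr Iff.rfl ?_ rfl
    rw [← prod_fiberwise P key]
    exact prod_congr rfl fun z _ => prod_congr rfl fun q hq => by rw [(mem_filter.1 hq).2]
  have hmarginal : ∀ z, ∑ b, φ z b = 1 := by
    intro z
    by_cases hz : ∃ q ∈ P, key q = z
    · obtain ⟨q, hq, rfl⟩ := hz
      have hfiber : {q' ∈ P | key q' = key q} = {q} := by
        ext q'
        simp only [mem_filter, mem_singleton]
        exact ⟨fun h => hkey h.1 hq h.2, by rintro rfl; exact ⟨hq, rfl⟩⟩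
      have hlicensed : ∃ q' ∈ P, key q' = key q := ⟨q, hq, rfl⟩
      simp [φ, hfiber, hlicensed]
    · have hfiber : {q ∈ P | key q = z} = ∅ := filter_eq_empty_iff.2 fun q hq h => hz ⟨q, hq, h⟩
      simp [φ, hfiber, hz]
  rw [sum_congr rfl fun τ _ => hfactor τ, ← Fintype.prod_sum]
  exact prod_eq_one fun z _ => hmarginal z

end Bernoulli

namespace PECDomain

variable (D : PECDomain F A V n)

noncomputable def outcomes : Finset ((F → Option V) × ℝ) := D.cprops.toFinset.biUnion Prod.snd

noncomputable def traceCandidates :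
    Finset (((F → V) × ℝ) × (Fin (n + 1) → Option ((F → Option V) × ℝ))) :=
  D.init ×ˢ Fintype.piFinset fun _ => insertNone D.outcomes

def EffectAllowed (st : (F → V) × (A → Bool)) (x : Option ((F → Option V) × ℝ)) : Prop :=
  x.elim (¬ ∃ c, c ∈ D.cprops ∧ c.1 st) fun O => ∃ c, (c ∈ D.cprops ∧ c.1 st) ∧ O ∈ c.2

def effectStep (s : F → V) (x : Option ((F → Option V) × ℝ)) : F → V :=
  x.elim s fun O => upd s O.1

noncomputable def effectProb (x : Option ((F → Option V) × ℝ)) : ℝ := x.elim 1 Prod.snd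

theorem mem_outcomes {c : (((F → V) × (A → Bool)) → Prop) × Finset ((F → Option V) × ℝ)}
    (hc : c ∈ D.cprops) {O : (F → Option V) × ℝ} (hO : O ∈ c.2) : O ∈ D.outcomes :=
  mem_biUnion.2 ⟨c, List.mem_toFinset.2 hc, hO⟩

theorem mem_traceCandidates_of_isTrace {w : PECWorld F A V n} {tr} (h : IsTrace D w tr) :
    tr ∈ D.traceCandidates := by
  refine mem_product.2 ⟨h.1, Fintype.mem_piFinset.2 fun i => ?_⟩
  have hallowed := h.2.2.1 i
  cases hx : tr.2 i with
  | none => exact none_mem_insertNone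
  | some O =>
    rw [hx] at hallowed
    obtain ⟨c, ⟨hc, -⟩, hO⟩ := hallowed
    exact some_mem_insertNone.2 (D.mem_outcomes hc hO)

theorem finsum_isTrace (w : PECWorld F A V n) :
    ∑ᶠ tr ∈ {tr | IsTrace D w tr}, epsTrace tr =
      ∑ tr ∈ D.traceCandidates with IsTrace D w tr, epsTrace tr := by
  have hset : {tr | IsTrace D w tr} = ↑{tr ∈ D.traceCandidates | IsTrace D w tr} := by
    ext tr
    exact ⟨fun h => mem_filter.2 ⟨D.mem_traceCandidates_of_isTrace h, h⟩,
      fun h => (mem_filter.1 h).2⟩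
  rw [hset, finsum_mem_coe_finset]

theorem isTrace_iff_isRun (τ : Fin (n + 1) → A → Bool) (σ : Fin (n + 1) → F → V) (O : (F → V) × ℝ)
    (f : Fin (n + 1) → Option ((F → Option V) × ℝ)) :
    IsTrace D (fun i => (σ i, τ i)) (O, f) ↔
      O ∈ D.init ∧ IsRun effectStep (fun i s => D.EffectAllowed (s, τ i)) O.1 σ f :=
  Iff.rfl

theorem sum_effectProb_eq_one (hc_sum : ∀ c ∈ D.cprops, ∑ O ∈ c.2, O.2 = 1)
    (hc_excl : ∀ s c c', c ∈ D.cprops → c' ∈ D.cprops → c.1 s → c'.1 s → c = c')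
    (st : (F → V) × (A → Bool)) :
    ∑ x ∈ insertNone D.outcomes with D.EffectAllowed st x, effectProb x = 1 := by
  rw [sum_filter, sum_insertNone]
  by_cases hact : ∃ c, c ∈ D.cprops ∧ c.1 st
  · obtain ⟨c, hc, hcst⟩ := hact
    have hsome : ∀ O, D.EffectAllowed st (some O) ↔ O ∈ c.2 := fun O =>
      ⟨fun ⟨c', hc', hO⟩ => hc_excl st c' c hc'.1 hc hc'.2 hcst ▸ hO, fun hO => ⟨c, ⟨hc, hcst⟩, hO⟩⟩
    have hnone : ¬ D.EffectAllowed st none := not_not.2 ⟨c, hc, hcst⟩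
    rw [if_neg hnone, zero_add, sum_congr rfl fun O _ => if_congr (hsome O) rfl rfl, sum_ite_mem,
      inter_eq_right.2 fun O => D.mem_outcomes hc]
    exact hc_sum c hc
  · have hnone : D.EffectAllowed st none := hact
    have hsome : ∀ O, ¬ D.EffectAllowed st (some O) := fun O ⟨c, hc, _⟩ => hact ⟨c, hc⟩
    rw [if_pos hnone, sum_eq_zero fun O _ => if_neg (hsome O), add_zero]
    rfl

theorem sum_sum_isTrace_eq_one [Fintype F] [Fintype V] [DecidableEq F]
    (hinit_sum : ∑ O ∈ D.init, O.2 = 1) (hc_sum : ∀ c ∈ D.cprops, ∑ O ∈ c.2, O.2 = 1)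
    (hc_excl : ∀ s c c', c ∈ D.cprops → c' ∈ D.cprops → c.1 s → c'.1 s → c = c')
    (τ : Fin (n + 1) → A → Bool) :
    ∑ σ : Fin (n + 1) → F → V,
      ∑ tr ∈ D.traceCandidates with IsTrace D (fun i => (σ i, τ i)) tr, epsTrace tr = 1 := by
  have hruns (O : (F → V) × ℝ) := sum_isRun_eq_one effectStep effectProb (insertNone D.outcomes)
    (fun i s => D.EffectAllowed (s, τ i)) O.1 fun i s => D.sum_effectProb_eq_one hc_sum hc_excl _
  rw [← hinit_sum]
  simp only [traceCandidates, sum_filter, sum_product]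
  rw [sum_comm]
  refine sum_congr rfl fun O hO => ?_
  rw [← mul_one O.2, ← hruns O, mul_sum]
  refine sum_congr rfl fun σ _ => ?_
  rw [mul_sum]
  refine sum_congr rfl fun f _ => ?_
  rw [isTrace_iff_isRun, and_iff_right hO, mul_ite, mul_zero]
  rfl

def ActionsLicensed (τ : Fin (n + 1) → A → Bool) : Prop :=
  ∀ a i, τ i a = true → ∃ p : ℝ, (a, i, p) ∈ D.pprops

theorem epsD_eq_zero_of_mem_of_eq_false {w : PECWorld F A V n} {a : A} {i : Fin (n + 1)}
    (h1 : (a, i, 1) ∈ D.pprops) (hw : (w i).2 a = false) : epsD D w = 0 :=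
  prod_eq_zero h1 (by simp [hw])

noncomputable def actionWeight (τ : Fin (n + 1) → A → Bool) : ℝ :=
  if D.ActionsLicensed τ then ∏ q ∈ D.pprops, (if τ q.2.1 q.1 then q.2.2 else 1 - q.2.2) else 0

theorem ite_cwa_epsD_eq_actionWeight (w : PECWorld F A V n) :
    (if cwa D w then epsD D w else 0) = D.actionWeight fun i => (w i).2 := by
  rw [actionWeight]
  by_cases hlic : D.ActionsLicensed (fun i => (w i).2)
  · rw [if_pos hlic]
    by_cases hforced : ∀ a i, (a, i, (1 : ℝ)) ∈ D.pprops → (w i).2 a = true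
    · exact if_pos ⟨hlic, hforced⟩
    · push Not at hforced
      obtain ⟨a, i, h1, hw⟩ := hforced
      rw [if_neg fun h => hw (h.2 a i h1)]
      exact (D.epsD_eq_zero_of_mem_of_eq_false h1 (by simpa using hw)).symm
  · rw [if_neg hlic, if_neg fun h => hlic h.1]

theorem modelOf_eq (w : PECWorld F A V n) :
    modelOf D w = D.actionWeight (fun i => (w i).2) *
      ∑ tr ∈ D.traceCandidates with IsTrace D w tr, epsTrace tr := by
  rw [← ite_cwa_epsD_eq_actionWeight, modelOf, wellBehaved, finsum_isTrace]
  by_cases hcwa : cwa D w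
  · by_cases htr : ∃ tr, IsTrace D w tr
    · rw [if_pos ⟨hcwa, htr⟩, if_pos hcwa]
    · rw [if_neg fun h => htr h.2, filter_false_of_mem fun tr _ h => htr ⟨tr, h⟩, sum_empty,
        mul_zero]
  · rw [if_neg fun h => hcwa h.1, if_neg hcwa, zero_mul]

theorem sum_actionWeight_eq_one [Fintype A] [DecidableEq A]
    (hp_unique : ∀ a i (p p' : ℝ), (a, i, p) ∈ D.pprops → (a, i, p') ∈ D.pprops → p = p') :
    ∑ τ, D.actionWeight τ = 1 := by
  have hkey : Set.InjOn (fun q : A × Fin (n + 1) × ℝ => (q.2.1, q.1)) D.pprops := by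
    rintro ⟨a, i, p⟩ hq ⟨a', i', p'⟩ hq' h
    obtain ⟨rfl, rfl⟩ : i = i' ∧ a = a' := by simpa using h
    rw [hp_unique a i p p' hq hq']
  rw [← (Equiv.curry _ _ _).sum_comp]
  convert sum_ite_prod_bernoulli_eq_one D.pprops _ (fun q => q.2.2) hkey using 2 with t
  refine if_congr ?_ rfl rfl
  constructor
  · rintro h ⟨i, a⟩ ht
    obtain ⟨p, hp⟩ := h a i ht
    exact ⟨(a, i, p), hp, rfl⟩
  · intro h a i ht
    obtain ⟨⟨a', i', p⟩, hq, he⟩ := h (i, a) ht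
    obtain ⟨rfl, rfl⟩ : i' = i ∧ a' = a := by simpa using he
    exact ⟨p, hq⟩

end PECDomain

theorem stmt16_general [Fintype F] [Fintype A] [Fintype V]
    [DecidableEq F] [DecidableEq A]
    (D : PECDomain F A V n)
    (hinit_sum : ∑ O ∈ D.init, O.2 = 1)
    (hc_sum : ∀ c ∈ D.cprops, ∑ O ∈ c.2, O.2 = 1)
    (hc_excl : ∀ s c c', c ∈ D.cprops → c' ∈ D.cprops → c.1 s → c'.1 s → c = c')
    (hp_unique : ∀ a i (p p' : ℝ), (a, i, p) ∈ D.pprops → (a, i, p') ∈ D.pprops → p = p') :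
    (∑ w : PECWorld F A V n, modelOf D w) = 1 ∧ ∃ w, wellBehaved D w := by
  have hmass : ∑ w : PECWorld F A V n, modelOf D w = 1 := calc
    _ = ∑ τ : Fin (n + 1) → A → Bool, ∑ σ : Fin (n + 1) → F → V,
          modelOf D fun i => (σ i, τ i) := by
      rw [← (Equiv.arrowProdEquivProdArrow _ _ _).symm.sum_comp, Fintype.sum_prod_type_right]
      rfl
    _ = ∑ τ, D.actionWeight τ := by
      simp only [D.modelOf_eq, ← mul_sum, D.sum_sum_isTrace_eq_one hinit_sum hc_sum hc_excl,
        mul_one]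
    _ = 1 := D.sum_actionWeight_eq_one hp_unique
  refine ⟨hmass, ?_⟩
  obtain ⟨w, -, hw⟩ := exists_ne_zero_of_sum_ne_zero (hmass ▸ one_ne_zero)
  exact ⟨w, by_contra fun h => hw (by rw [modelOf, if_neg h])⟩

/-- The sum of the model over all worlds is 1; consequently there is a
well-behaved world. -/
theorem stmt16 [Fintype F] [Fintype A] [Fintype V]
    [DecidableEq F] [DecidableEq A] [DecidableEq V]
    (D : PECDomain F A V n)
    (hinit_sum : ∑ O ∈ D.init, O.2 = 1)
    (hinit_prob : ∀ O ∈ D.init, O.2 ∈ Set.Ioc (0 : ℝ) 1)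
    (hinit_inj : Set.InjOn Prod.fst (D.init : Set ((F → V) × ℝ)))
    (hc_sum : ∀ c ∈ D.cprops, ∑ O ∈ c.2, O.2 = 1)
    (hc_prob : ∀ c ∈ D.cprops, ∀ O ∈ c.2, O.2 ∈ Set.Ioc (0 : ℝ) 1)
    (hc_inj : ∀ c ∈ D.cprops, Set.InjOn Prod.fst (c.2 : Set ((F → Option V) × ℝ)))
    (hc_excl : ∀ s c c', c ∈ D.cprops → c' ∈ D.cprops → c.1 s → c'.1 s → c = c')
    (hp_prob : ∀ q ∈ D.pprops, q.2.2 ∈ Set.Ioc (0 : ℝ) 1)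
    (hp_unique : ∀ a i (p p' : ℝ), (a, i, p) ∈ D.pprops → (a, i, p') ∈ D.pprops → p = p') :
    (∑ w : PECWorld F A V n, modelOf D w) = 1 ∧ ∃ w, wellBehaved D w :=
  stmt16_general D hinit_sum hc_sum hc_excl hp_unique
end

section
/- In the Keys domain D_K (initially no keys, not locked out, inside; PickupKeys performed at 7:30 with probability 0.99 causing HasKeys deterministically; GoOut performed at 7:40 with probability 1, causing LockedOut and going Outside when inside without keys, and just going Outside when inside with keys), there are exactly two well-behaved worlds, with model values 0.99 and 0.01, and the model assigns probability 0.01 to LockedOut at any instant after 7:40 and probability 0.99 to HasKeys at any instant after 7:30. -/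
open scoped Classical

variable {F A V : Type} {n : ℕ}

/-- The Keys domain `D_K`. Fluents `Fin 3`: `0` = HasKeys, `1` = LockedOut,
`2` = Location (`true` = Inside, `false` = Outside). Actions `Bool`:
`true` = PickupKeys, `false` = GoOut. Instants `Fin 4`: `0` = 7:30, `1` = 7:40,
`2, 3` = later instants. Initially no keys, not locked out, inside; PickupKeys is
performed at 7:30 with probability 0.99 (causing HasKeys when inside); GoOut is
performed at 7:40 with probability 1, causing LockedOut and Outside when inside
without keys, and just Outside when inside with keys. -/
noncomputable def keysDomain : PECDomain (Fin 3) Bool Bool 3 where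
  init := {(fun f => if f = 2 then true else false, 1)}
  cprops := [
    ⟨fun s => s.2 false = true ∧ s.1 0 = false ∧ s.1 2 = true,
      {(fun f => if f = 1 then some true else if f = 2 then some false else none, 1)}⟩,
    ⟨fun s => s.2 false = true ∧ s.1 0 = true ∧ s.1 2 = true,
      {(fun f => if f = 2 then some false else none, 1)}⟩,
    ⟨fun s => s.2 true = true ∧ s.1 2 = true,
      {(fun f => if f = 0 then some true else none, 1)}⟩]
  pprops := {(true, (0 : Fin 4), (0.99 : ℝ)), (false, (1 : Fin 4), (1 : ℝ))}

/-!
The closed world assumption fixes the actions of a world up to one bit: whether PickupKeys happens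
at 7:30. Every c-proposition of `keysDomain` has a single certain outcome, and in a world obeying
the CWA at most one of them is activated at any instant, so the effect chosen at each instant, hence
the trace and the whole evolution of the fluents, is forced. There is therefore exactly one
well-behaved world for each value of the bit, with a single trace of evaluation 1, and its model is
the evaluation 0.99 or 0.01 of the action narrative.
-/

/-- The third clause of `IsTrace`, at a single instant. -/
def Justified (D : PECDomain F A V n) (w : PECWorld F A V n) (i : Fin (n + 1))
    (x : Option ((F → Option V) × ℝ)) : Prop :=
  x.elim (¬ ∃ c, activated D w i c) (fun O => ∃ c, activated D w i c ∧ O ∈ c.2)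

theorem Justified.eq_of_forall_activated {D : PECDomain F A V n} {w : PECWorld F A V n}
    {i : Fin (n + 1)} {x e : Option ((F → Option V) × ℝ)} (hx : Justified D w i x)
    (he : Justified D w i e) (hact : ∀ c, activated D w i c → ∀ O ∈ c.2, e = some O) :
    x = e := by
  cases x with
  | some O =>
    obtain ⟨c, hc, hO⟩ := hx
    exact (hact c hc O hO).symm
  | none =>
    cases e with
    | none => rfl
    | some O => exact absurd (he.imp fun c hc => hc.1) hx

namespace Keys

abbrev State := (Fin 3 → Bool) × (Bool → Bool)

def initState : Fin 3 → Bool := fun f => if f = 2 then true else false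

def lockedOutside : Fin 3 → Option Bool :=
  fun f => if f = 1 then some true else if f = 2 then some false else none
def outside : Fin 3 → Option Bool := fun f => if f = 2 then some false else none
def withKeys : Fin 3 → Option Bool := fun f => if f = 0 then some true else none

abbrev CProp := (State → Prop) × Finset ((Fin 3 → Option Bool) × ℝ)

noncomputable def goOutWithoutKeys : CProp :=
  ⟨fun s => s.2 false = true ∧ s.1 0 = false ∧ s.1 2 = true, {(lockedOutside, 1)}⟩
noncomputable def goOutWithKeys : CProp :=
  ⟨fun s => s.2 false = true ∧ s.1 0 = true ∧ s.1 2 = true, {(outside, 1)}⟩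
noncomputable def pickupKeys : CProp :=
  ⟨fun s => s.2 true = true ∧ s.1 2 = true, {(withKeys, 1)}⟩

theorem cprops_eq : keysDomain.cprops = [goOutWithoutKeys, goOutWithKeys, pickupKeys] := rfl

-- GoOut and PickupKeys together would activate conflicting c-propositions; a world obeying the
-- CWA never does both at once (`actions_not_both`), so the precedence given to GoOut is immaterial.
noncomputable def effect (s : State) : Option ((Fin 3 → Option Bool) × ℝ) :=
  if s.2 false && s.1 2 then some (if s.1 0 then outside else lockedOutside, 1)
  else if s.2 true && s.1 2 then some (withKeys, 1)
  else none

noncomputable def next (s : State) : Fin 3 → Bool :=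
  (effect s).elim s.1 (fun O => upd s.1 O.1)

def actions (pickup : Bool) (i : ℕ) : Bool → Bool :=
  fun a => if a then pickup && decide (i = 0) else decide (i = 1)

noncomputable def fluents (pickup : Bool) : ℕ → Fin 3 → Bool
  | 0 => initState
  | k + 1 => next (fluents pickup k, actions pickup k)

noncomputable def world (pickup : Bool) : PECWorld (Fin 3) Bool Bool 3 :=
  fun i => (fluents pickup i, actions pickup i)

noncomputable def trace (w : PECWorld (Fin 3) Bool Bool 3) :
    ((Fin 3 → Bool) × ℝ) × (Fin 4 → Option ((Fin 3 → Option Bool) × ℝ)) :=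
  ((initState, 1), fun i => effect (w i))

theorem justified_effect (w : PECWorld (Fin 3) Bool Bool 3) (i : Fin 4) :
    Justified keysDomain w i (effect (w i)) := by
  simp only [Justified, effect]
  split_ifs
  · exact ⟨goOutWithKeys, ⟨by simp [cprops_eq], by simp_all [goOutWithKeys]⟩,
      Finset.mem_singleton_self _⟩
  · exact ⟨goOutWithoutKeys, ⟨by simp [cprops_eq], by simp_all [goOutWithoutKeys]⟩,
      Finset.mem_singleton_self _⟩
  · exact ⟨pickupKeys, ⟨by simp [cprops_eq], by simp_all [pickupKeys]⟩,
      Finset.mem_singleton_self _⟩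
  · rintro ⟨c, hc, hb⟩
    simp only [cprops_eq, List.mem_cons, List.not_mem_nil, or_false] at hc
    rcases hc with rfl | rfl | rfl <;> simp_all [goOutWithoutKeys, goOutWithKeys, pickupKeys]

theorem effect_eq_of_activated {w : PECWorld (Fin 3) Bool Bool 3} {i : Fin 4}
    (hs : ¬((w i).2 true = true ∧ (w i).2 false = true)) (c : CProp)
    (hc : activated keysDomain w i c) : ∀ O ∈ c.2, effect (w i) = some O := by
  obtain ⟨hc, hb⟩ := hc
  simp only [cprops_eq, List.mem_cons, List.not_mem_nil, or_false] at hc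
  rcases hc with rfl | rfl | rfl <;> simp_all [effect, goOutWithoutKeys, goOutWithKeys, pickupKeys]

theorem mem_pprops {a : Bool} {i : Fin 4} {p : ℝ} :
    (a, i, p) ∈ keysDomain.pprops ↔
      (a = true ∧ i = 0 ∧ p = 0.99) ∨ (a = false ∧ i = 1 ∧ p = 1) := by
  simp [keysDomain]

theorem actions_eq_of_cwa {w : PECWorld (Fin 3) Bool Bool 3} (hw : cwa keysDomain w) (i : Fin 4) :
    (w i).2 = actions ((w 0).2 true) i := by
  funext a
  have licensed := hw.1 a i
  have forced := hw.2 a i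
  cases a <;> fin_cases i <;> simp_all [actions, mem_pprops]

theorem cwa_world (b : Bool) : cwa keysDomain (world b) := by
  constructor
  · intro a i
    cases a <;> fin_cases i <;> cases b <;> simp [world, actions, mem_pprops]
  · intro a i h
    rcases mem_pprops.1 h with ⟨-, -, h⟩ | ⟨rfl, rfl, -⟩
    · norm_num at h
    · rfl

theorem actions_not_both (b : Bool) (i : ℕ) :
    ¬(actions b i true = true ∧ actions b i false = true) := by
  simp only [actions, if_true, Bool.and_eq_true, decide_eq_true_eq, Bool.false_eq_true, if_false]
  omega

theorem eq_trace_of_isTrace {w : PECWorld (Fin 3) Bool Bool 3} {tr} (hw : cwa keysDomain w)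
    (h : IsTrace keysDomain w tr) : tr = trace w := by
  refine Prod.ext (Finset.mem_singleton.1 h.1) (funext fun i => ?_)
  have hs : ¬((w i).2 true = true ∧ (w i).2 false = true) := by
    rw [actions_eq_of_cwa hw i]
    exact actions_not_both _ _
  exact Justified.eq_of_forall_activated (h.2.2.1 i) (justified_effect w i)
    (effect_eq_of_activated hs)

theorem fluents_succ_of_isTrace {w : PECWorld (Fin 3) Bool Bool 3} {tr} (hw : cwa keysDomain w)
    (h : IsTrace keysDomain w tr) (i : Fin 3) : (w i.succ).1 = next (w i.castSucc) := by
  rw [h.2.2.2 i, eq_trace_of_isTrace hw h]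
  rfl

theorem isTrace_world (b : Bool) : IsTrace keysDomain (world b) (trace (world b)) :=
  ⟨Finset.mem_singleton_self _, rfl, justified_effect _, fun _ => rfl⟩

theorem wellBehaved_world (b : Bool) : wellBehaved keysDomain (world b) :=
  ⟨cwa_world b, _, isTrace_world b⟩

theorem eq_world_of_wellBehaved {w : PECWorld (Fin 3) Bool Bool 3}
    (h : wellBehaved keysDomain w) : w = world ((w 0).2 true) := by
  obtain ⟨hw, tr, htr⟩ := h
  have hfluents : ∀ i, (w i).1 = fluents ((w 0).2 true) i := by
    intro i
    induction i using Fin.induction with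
    | zero => rw [htr.2.1, Finset.mem_singleton.1 htr.1]; rfl
    | succ i ih =>
      rw [fluents_succ_of_isTrace hw htr i, ← Prod.mk.eta (p := w i.castSucc), ih,
        actions_eq_of_cwa hw i.castSucc]
      rfl
  funext i
  exact Prod.ext (hfluents i) (actions_eq_of_cwa hw i)

theorem wellBehaved_iff {w : PECWorld (Fin 3) Bool Bool 3} :
    wellBehaved keysDomain w ↔ w ∈ Set.range world :=
  ⟨fun h => ⟨_, (eq_world_of_wellBehaved h).symm⟩,
    by rintro ⟨b, rfl⟩; exact wellBehaved_world b⟩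

theorem world_injective : Function.Injective world := fun b b' h => by
  simpa [world, actions] using congrArg (fun w => (w 0).2 true) h

theorem traces_world (b : Bool) :
    {tr | IsTrace keysDomain (world b) tr} = {trace (world b)} :=
  Set.ext fun _ =>
    ⟨fun h => eq_trace_of_isTrace (cwa_world b) h, by rintro rfl; exact isTrace_world b⟩

theorem epsTrace_trace (w : PECWorld (Fin 3) Bool Bool 3) : epsTrace (trace w) = 1 := by
  rw [epsTrace, trace, one_mul]
  refine Finset.prod_eq_one fun i _ => ?_
  simp only [effect]
  split_ifs <;> rfl

theorem epsD_world (b : Bool) : epsD keysDomain (world b) = if b then 0.99 else 0.01 := by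
  rw [epsD, show keysDomain.pprops = {(true, 0, 0.99), (false, 1, 1)} from rfl,
    Finset.prod_pair (by simp)]
  cases b <;> norm_num [world, actions]

theorem modelOf_world (b : Bool) : modelOf keysDomain (world b) = if b then 0.99 else 0.01 := by
  rw [modelOf, if_pos (wellBehaved_world b), traces_world, finsum_mem_singleton, epsTrace_trace,
    epsD_world, mul_one]

theorem sum_ite_modelOf (P : PECWorld (Fin 3) Bool Bool 3 → Prop) [DecidablePred P] :
    ∑ w, (if P w then modelOf keysDomain w else 0) =
      ∑ b, if P (world b) then modelOf keysDomain (world b) else 0 := by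
  refine (Fintype.sum_of_injective world world_injective _ _ (fun w hw => ?_) fun _ => rfl).symm
  rw [modelOf, if_neg (wellBehaved_iff.not.2 hw), ite_self]

theorem lockedOut_world (b : Bool) {i : Fin 4} (hi : 1 < i) : (world b i).1 1 = !b := by
  revert hi
  fin_cases i <;> cases b <;> decide

theorem hasKeys_world (b : Bool) {i : Fin 4} (hi : 0 < i) : (world b i).1 0 = b := by
  revert hi
  fin_cases i <;> cases b <;> decide

end Keys

/-- There are exactly two well-behaved worlds of the Keys domain, with model values
0.99 (keys picked up) and 0.01 (keys forgotten); LockedOut holds with probability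
0.01 at any instant after 7:40 and HasKeys with probability 0.99 at any instant
after 7:30. -/
theorem stmt18 :
    ∃ w1 w2 : PECWorld (Fin 3) Bool Bool 3,
      w1 ≠ w2 ∧ wellBehaved keysDomain w1 ∧ wellBehaved keysDomain w2 ∧
      (∀ w, wellBehaved keysDomain w → w = w1 ∨ w = w2) ∧
      modelOf keysDomain w1 = 0.99 ∧ modelOf keysDomain w2 = 0.01 ∧
      (∀ i : Fin 4, 1 < i →
        (∑ w : PECWorld (Fin 3) Bool Bool 3,
          if (w i).1 1 = true then modelOf keysDomain w else 0) = 0.01) ∧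
      (∀ i : Fin 4, 0 < i →
        (∑ w : PECWorld (Fin 3) Bool Bool 3,
          if (w i).1 0 = true then modelOf keysDomain w else 0) = 0.99) := by
  refine ⟨Keys.world true, Keys.world false, Keys.world_injective.ne (by decide),
    Keys.wellBehaved_world true, Keys.wellBehaved_world false, fun w hw => ?_,
    by simp [Keys.modelOf_world], by simp [Keys.modelOf_world], fun i hi => ?_, fun i hi => ?_⟩
  · obtain ⟨b, rfl⟩ := Keys.wellBehaved_iff.1 hw
    cases b <;> simp
  · rw [Keys.sum_ite_modelOf, Fintype.sum_bool]
    simp [Keys.lockedOut_world _ hi, Keys.modelOf_world]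
  · rw [Keys.sum_ite_modelOf, Fintype.sum_bool]
    simp [Keys.hasKeys_world _ hi, Keys.modelOf_world]
end
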